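/- Let 4 ≤ p ≤ 6 and let δ₁, δ₂ > 0 satisfy 1 − 4/p ≤ δ₁ ≤ 1/2 + 3/p and 1 − 4/p ≤ δ₂ ≤ 1. Let τ be a sequence in T(δ₁, δ₂) such that τ_n ≤ n − 1/2 + 3/p for all n ≥ 1. Then E_p(τ) = Σ_{k=0}^∞ A_p(τ; k). -/

import Mathlib

open MeasureTheory Real Set

/-- The kernel `K_p(τ; x)`. -/
noncomputable def Kp (p : ℝ) (τ : ℕ → ℝ) (x : ℝ) : ℝ :=
  ∑' n : ℕ, (Set.Ioo (τ n) (τ (n + 1))).indicator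
    (fun y => Real.sin (p / 2 * π * (y - n)) / (π * y)) x

/-- The quantity `E_p(τ)`. -/
noncomputable def Ep (p : ℝ) (τ : ℕ → ℝ) : ℝ :=
  ∫ x in Set.Ioi (0 : ℝ), (max 0 (Kp p τ x)) ^ 2

/-- The set of sequences `T(δ₁, δ₂)`. -/
def Tset (δ₁ δ₂ : ℝ) : Set (ℕ → ℝ) :=
  {τ | τ 0 = 0 ∧ StrictMono τ ∧ δ₁ ≤ τ 1 ∧ ∀ n, 1 ≤ n → δ₂ ≤ τ (n + 1) - τ n}

/-- The supremum `ℰ_p(δ₁, δ₂) = sup_{τ ∈ T(δ₁,δ₂)} E_p(τ)`. -/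
noncomputable def Esup (p δ₁ δ₂ : ℝ) : ℝ := sSup (Ep p '' Tset δ₁ δ₂)

/-- The contribution `A_p(τ; k)` of the `k`-th ray (range `4 ≤ p ≤ 6`, with
`ϱ = 1 - 4/p` and `I_{k,j} = (k - 1 + 4/p + jϱ, k - 1 + 4/p + jϱ + 2/p)`);
the term `j = 0` is omitted when `k = 0`. -/
noncomputable def Ap (p : ℝ) (τ : ℕ → ℝ) (k : ℕ) : ℝ :=
  ∑' j : ℕ,
    if k = 0 ∧ j = 0 then 0 else
      ∫ x in ((k : ℝ) - 1 + 4 / p + j * (1 - 4 / p))..((k : ℝ) - 1 + 4 / p + j * (1 - 4 / p) + 2 / p),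
        (Set.Ioo (τ (k + j - 1)) (τ (k + j))).indicator
          (fun y => Real.sin (p / 2 * π * (y - ((k : ℝ) - 1 + j))) ^ 2 / (π ^ 2 * y ^ 2)) x

/-!
On the level interval `(τ_n, τ_{n+1})` the kernel is `sin (p π (x - n) / 2) / (π x)`, whose
positive part lives on the intervals `x - n ∈ (4m/p, 4m/p + 2/p)`, `m ∈ ℤ`. With `k = n + m` and
`j = 1 - m` such an interval is exactly `I_{k,j}`, and the constraints on `τ` force `-n ≤ m ≤ 1`,
i.e. `k, j ≥ 0`. Hence the pieces `I_{k,j} ∩ (τ_{k-1+j}, τ_{k+j})` are pairwise disjoint and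
carry all of `max(0, K_p)²` on `(0, ∞)`. As `max(0, K_p)² ≤ C / (1 + x²)` there, countable
additivity of the integral splits `E_p(τ)` into the integrals over the pieces, and grouping them
by `k` gives the `A_p(τ; k)`.
-/

open Function

section Kernel

variable {p : ℝ} {τ : ℕ → ℝ}

lemma Monotone.eq_of_mem_Ioo_succ (hτ : Monotone τ) {x : ℝ} {n n' : ℕ}
    (hx : x ∈ Ioo (τ n) (τ (n + 1))) (hx' : x ∈ Ioo (τ n') (τ (n' + 1))) : n = n' := by
  by_contra h
  exact disjoint_left.1 (hτ.pairwise_disjoint_on_Ioo_succ h) hx hx'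

lemma Kp_eq_of_mem_Ioo (hτ : Monotone τ) {x : ℝ} {n : ℕ} (hx : x ∈ Ioo (τ n) (τ (n + 1))) :
    Kp p τ x = sin (p / 2 * π * (x - n)) / (π * x) := by
  rw [Kp, tsum_eq_single n fun n' hn' =>
    indicator_of_notMem (fun hx' => hn' (hτ.eq_of_mem_Ioo_succ hx' hx)) _, indicator_of_mem hx]

lemma Kp_eq_zero {x : ℝ} (hx : ∀ n : ℕ, x ∉ Ioo (τ n) (τ (n + 1))) : Kp p τ x = 0 := by
  simp [Kp, indicator_of_notMem (hx _)]

lemma measurable_Kp (hτ : Monotone τ) : Measurable (Kp p τ) := by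
  set f : ℕ → ℝ → ℝ := fun n => (Ioo (τ n) (τ (n + 1))).indicator
    (fun y => sin (p / 2 * π * (y - n)) / (π * y))
  have hf : ∀ n, Measurable (f n) := fun n =>
    (by fun_prop : Measurable fun y : ℝ => sin (p / 2 * π * (y - n)) / (π * y)).indicator
      measurableSet_Ioo
  have hsum : ∀ x, Summable fun n => f n x := by
    intro x
    by_cases hx : ∃ n, x ∈ Ioo (τ n) (τ (n + 1))
    · obtain ⟨n, hn⟩ := hx
      exact (hasSum_single n fun n' hn' =>
        indicator_of_notMem (fun hx' => hn' (hτ.eq_of_mem_Ioo_succ hx' hn)) _).summable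
    · push Not at hx
      simp only [f, indicator_of_notMem (hx _)]
      exact summable_zero
  exact measurable_of_tendsto_metrizable (fun N => Finset.measurable_sum _ fun n _ => hf n)
    (tendsto_pi_nhds.2 fun x => (hsum x).hasSum.tendsto_sum_nat)

end Kernel

section SinPositivity

lemma sin_pi_mul_sub_two_mul_int (t : ℝ) (m : ℤ) : sin (π * (t - 2 * m)) = sin (π * t) := by
  rw [show π * (t - 2 * m) = π * t - m * (2 * π) by ring, sin_sub_int_mul_two_pi]

lemma sin_pi_mul_pos_iff {t : ℝ} :
    0 < sin (π * t) ↔ ∃ m : ℤ, t ∈ Ioo (2 * (m : ℝ)) (2 * m + 1) := by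
  constructor
  · intro h
    refine ⟨⌊t / 2⌋, ?_⟩
    have hlo : 2 * (⌊t / 2⌋ : ℝ) ≤ t := by linarith [Int.floor_le (t / 2)]
    have hhi : t < 2 * ⌊t / 2⌋ + 2 := by linarith [Int.lt_floor_add_one (t / 2)]
    rw [← sin_pi_mul_sub_two_mul_int t ⌊t / 2⌋] at h
    set s := t - 2 * (⌊t / 2⌋ : ℝ)
    constructor
    · by_contra! h0
      simp [show s = 0 by linarith] at h
    · by_contra! h1
      have : 0 ≤ sin (π * (s - 1)) :=
        sin_nonneg_of_nonneg_of_le_pi (by nlinarith [pi_pos]) (by nlinarith [pi_pos])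
      rw [show π * s = π * (s - 1) + π by ring, sin_add_pi] at h
      linarith
  · rintro ⟨m, h1, h2⟩
    rw [← sin_pi_mul_sub_two_mul_int t m]
    exact sin_pos_of_pos_of_lt_pi (by nlinarith [pi_pos]) (by nlinarith [pi_pos])

lemma sin_pi_mul_le {t : ℝ} {m : ℤ} (ht : 2 * (m : ℝ) ≤ t) : sin (π * t) ≤ π * (t - 2 * m) := by
  rw [← sin_pi_mul_sub_two_mul_int t m]
  exact sin_le (by nlinarith [pi_pos])

lemma eq_of_mem_Ioo_two_mul {t : ℝ} {m m' : ℤ} (h : t ∈ Ioo (2 * (m : ℝ)) (2 * m + 1))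
    (h' : t ∈ Ioo (2 * (m' : ℝ)) (2 * m' + 1)) : m = m' := by
  have h₁ : ((2 * m : ℤ) : ℝ) < ((2 * m' + 1 : ℤ) : ℝ) := by push_cast; linarith [h.1, h'.2]
  have h₂ : ((2 * m' : ℤ) : ℝ) < ((2 * m + 1 : ℤ) : ℝ) := by push_cast; linarith [h'.1, h.2]
  norm_cast at h₁ h₂
  omega

lemma mem_Ioo_iff_half_mul_sub_mem_Ioo {p : ℝ} (hp : 0 < p) (c x : ℝ) (m : ℤ) :
    x ∈ Ioo (c + 4 * m / p) (c + 4 * m / p + 2 / p) ↔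
      p / 2 * (x - c) ∈ Ioo (2 * (m : ℝ)) (2 * m + 1) := by
  have e₁ : p / 2 * (x - c) - 2 * m = p / 2 * (x - (c + 4 * m / p)) := by field_simp; ring
  have e₂ : 2 * m + 1 - p / 2 * (x - c) = p / 2 * (c + 4 * m / p + 2 / p - x) := by
    field_simp; ring
  rw [mem_Ioo, mem_Ioo, ← sub_pos, ← sub_pos (a := c + 4 * m / p + 2 / p),
    ← sub_pos (a := p / 2 * (x - c)), ← sub_pos (b := p / 2 * (x - c)), e₁, e₂,
    mul_pos_iff_of_pos_left (half_pos hp), mul_pos_iff_of_pos_left (half_pos hp)]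

end SinPositivity

section Pieces

variable {p : ℝ} {τ : ℕ → ℝ}

noncomputable def leftEnd (p : ℝ) (k j : ℕ) : ℝ := k - 1 + 4 / p + j * (1 - 4 / p)

/-- `I_{k,j} ∩ (τ_{k-1+j}, τ_{k+j})`, empty for `(k, j) = (0, 0)` as in `Ap`. On the level
`n = k - 1 + j` it is where `sin (p π (x - n) / 2) > 0` with `x - n ∈ (4m/p, 4m/p + 2/p)`,
`m = 1 - j`. -/
noncomputable def piece (p : ℝ) (τ : ℕ → ℝ) (k j : ℕ) : Set ℝ :=
  if k = 0 ∧ j = 0 then ∅ else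
    Ioo (leftEnd p k j) (leftEnd p k j + 2 / p) ∩ Ioo (τ (k + j - 1)) (τ (k + j))

lemma measurableSet_piece (k j : ℕ) : MeasurableSet (piece p τ k j) := by
  unfold piece
  split_ifs
  exacts [MeasurableSet.empty, measurableSet_Ioo.inter measurableSet_Ioo]

lemma mem_piece_iff (hp : 0 < p) {k j n : ℕ} {m : ℤ} (hn : n + 1 = k + j) (hm : m + j = 1)
    {x : ℝ} :
    x ∈ piece p τ k j ↔
      x ∈ Ioo (τ n) (τ (n + 1)) ∧ p / 2 * (x - n) ∈ Ioo (2 * (m : ℝ)) (2 * m + 1) := by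
  have hleft : leftEnd p k j = n + 4 * m / p := by
    have hnR : (n : ℝ) + 1 = k + j := by exact_mod_cast hn
    have hmR : (m : ℝ) + j = 1 := by exact_mod_cast hm
    rw [leftEnd]
    linear_combination -hnR - 4 / p * hmR
  rw [piece, if_neg (by omega), show k + j - 1 = n by omega, ← hn, hleft,
    mem_inter_iff, mem_Ioo_iff_half_mul_sub_mem_Ioo hp, and_comm]

variable {k j : ℕ} {x : ℝ}

lemma one_le_add_of_mem_piece (hx : x ∈ piece p τ k j) : 1 ≤ k + j := by
  unfold piece at hx
  split_ifs at hx with h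
  · exact absurd hx (notMem_empty x)
  · omega

lemma pos_of_mem_piece (hτ : Monotone τ) (hτ0 : 0 ≤ τ 0) (hx : x ∈ piece p τ k j) : 0 < x := by
  unfold piece at hx
  split_ifs at hx
  · exact absurd hx (notMem_empty x)
  · exact (hτ0.trans (hτ (Nat.zero_le _))).trans_lt hx.2.1

lemma pairwise_disjoint_piece (hp : 0 < p) (hτ : Monotone τ) :
    Pairwise (Disjoint on fun i : ℕ × ℕ => piece p τ i.1 i.2) := by
  rintro ⟨k, j⟩ ⟨k', j'⟩ hne
  refine disjoint_left.2 fun x hx hx' => hne ?_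
  have h₁ := one_le_add_of_mem_piece hx
  have h₂ := one_le_add_of_mem_piece hx'
  obtain ⟨hL, hT⟩ := (mem_piece_iff hp (n := k + j - 1) (m := 1 - j) (by omega) (by omega)).1 hx
  obtain ⟨hL', hT'⟩ :=
    (mem_piece_iff hp (n := k' + j' - 1) (m := 1 - j') (by omega) (by omega)).1 hx'
  have hn := hτ.eq_of_mem_Ioo_succ hL hL'
  rw [hn] at hT
  have hm := eq_of_mem_Ioo_two_mul hT hT'
  ext <;> simp only <;> omega

end Pieces

section PositivePart

variable {p : ℝ} {τ : ℕ → ℝ} {k j : ℕ} {x : ℝ}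

lemma mem_Ioo_of_mem_piece (hp : 0 < p) (hx : x ∈ piece p τ k j) :
    x ∈ Ioo (τ (k + j - 1)) (τ (k + j - 1 + 1)) ∧
      p / 2 * (x - (k - 1 + j)) ∈ Ioo (2 * (1 - j : ℝ)) (2 * (1 - j) + 1) := by
  have hkj := one_le_add_of_mem_piece hx
  have hn : ((k + j - 1 : ℕ) : ℝ) = k - 1 + j := by
    rw [Nat.cast_sub hkj]; push_cast; ring
  have := (mem_piece_iff hp (n := k + j - 1) (m := 1 - j) (by omega) (by omega)).1 hx
  push_cast at this
  rwa [hn] at this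

lemma sin_pos_of_mem_piece (hp : 0 < p) (hx : x ∈ piece p τ k j) :
    0 < sin (p / 2 * π * (x - (k - 1 + j))) := by
  rw [show p / 2 * π * (x - (k - 1 + j)) = π * (p / 2 * (x - (k - 1 + j))) by ring]
  exact sin_pi_mul_pos_iff.2 ⟨1 - j, by push_cast; exact (mem_Ioo_of_mem_piece hp hx).2⟩

lemma sq_max_zero_Kp_of_mem_piece (hp : 0 < p) (hτ : Monotone τ) (hτ0 : 0 ≤ τ 0)
    (hx : x ∈ piece p τ k j) :
    max 0 (Kp p τ x) ^ 2 = sin (p / 2 * π * (x - (k - 1 + j))) ^ 2 / (π ^ 2 * x ^ 2) := by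
  have hx0 := pos_of_mem_piece hτ hτ0 hx
  have hn : ((k + j - 1 : ℕ) : ℝ) = k - 1 + j := by
    rw [Nat.cast_sub (one_le_add_of_mem_piece hx)]; push_cast; ring
  rw [Kp_eq_of_mem_Ioo hτ (mem_Ioo_of_mem_piece hp hx).1, hn,
    max_eq_right (div_pos (sin_pos_of_mem_piece hp hx) (by positivity)).le, div_pow, mul_pow]

lemma sq_max_zero_Kp_le_of_mem_piece (hp4 : 4 ≤ p) (hτ : Monotone τ) (hτ0 : 0 ≤ τ 0)
    (hx : x ∈ piece p τ k j) :
    max 0 (Kp p τ x) ^ 2 ≤ (p ^ 2 / 4 + 1) * (1 + x ^ 2)⁻¹ := by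
  have hp : 0 < p := by linarith
  have hkj := one_le_add_of_mem_piece hx
  have hx0 := pos_of_mem_piece hτ hτ0 hx
  have hs0 := sin_pos_of_mem_piece hp hx
  -- this is `p * leftEnd p k j`
  have hleft : 0 ≤ p * (k - 1 + j) + 4 * (1 - j) := by
    rcases Nat.eq_zero_or_pos k with rfl | hk
    · have : (1 : ℝ) ≤ j := by exact_mod_cast (by omega : 1 ≤ j)
      nlinarith
    · have : (1 : ℝ) ≤ k := by exact_mod_cast hk
      nlinarith [(j.cast_nonneg : (0 : ℝ) ≤ j)]
  have hs : sin (p / 2 * π * (x - (k - 1 + j))) ≤ p / 2 * π * x := by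
    have := sin_pi_mul_le (m := 1 - j) (by push_cast; exact (mem_Ioo_of_mem_piece hp hx).2.1.le)
    push_cast at this
    rw [show π * (p / 2 * (x - (k - 1 + j))) = p / 2 * π * (x - (k - 1 + j)) by ring] at this
    nlinarith [pi_pos]
  have hs1 := sin_le_one (p / 2 * π * (x - (k - 1 + j)))
  have hπ : 1 ≤ π ^ 2 := by nlinarith [pi_gt_three]
  rw [sq_max_zero_Kp_of_mem_piece hp hτ hτ0 hx, ← div_eq_mul_inv,
    div_le_div_iff₀ (by positivity) (by positivity)]
  nlinarith [pow_le_pow_left₀ hs0.le hs 2,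
    mul_le_mul_of_nonneg_right (pow_le_one₀ (n := 2) hs0.le hs1) (sq_nonneg x),
    mul_le_mul_of_nonneg_right hπ (sq_nonneg x)]

end PositivePart

section Covering

variable {p : ℝ} {τ : ℕ → ℝ}

lemma natCast_mul_le_of_mem_Tset {δ₁ δ₂ ρ : ℝ} (hτ : τ ∈ Tset δ₁ δ₂) (h₁ : ρ ≤ δ₁)
    (h₂ : ρ ≤ δ₂) (n : ℕ) : n * ρ ≤ τ n := by
  obtain ⟨hτ0, -, hτ1, hgap⟩ := hτ
  induction n with
  | zero => simp [hτ0]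
  | succ n ih =>
    rcases Nat.eq_zero_or_pos n with rfl | hn
    · simpa using h₁.trans hτ1
    · push_cast
      linarith [hgap n hn]

lemma exists_mem_piece_of_Kp_pos (hp : 0 < p) (hp6 : p ≤ 6) (hτ : Monotone τ)
    (hlow : ∀ n : ℕ, n * (1 - 4 / p) ≤ τ n) (hup : ∀ n : ℕ, 1 ≤ n → τ n ≤ n - 1 / 2 + 3 / p)
    {x : ℝ} (hx0 : 0 < x) (hK : 0 < Kp p τ x) : ∃ k j : ℕ, x ∈ piece p τ k j := by
  obtain ⟨n, hL⟩ : ∃ n : ℕ, x ∈ Ioo (τ n) (τ (n + 1)) := by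
    by_contra! h
    exact hK.ne' (Kp_eq_zero h)
  rw [Kp_eq_of_mem_Ioo hτ hL, div_pos_iff_of_pos_right (by positivity),
    show p / 2 * π * (x - n) = π * (p / 2 * (x - n)) by ring] at hK
  obtain ⟨m, hT⟩ := sin_pi_mul_pos_iff.1 hK
  -- `-n ≤ m ≤ 1` is what makes `(k, j) = (n + m, 1 - m)` a pair of naturals
  have hm_le : m ≤ 1 := by
    have hx : x - n < 1 / 2 + 3 / p := by
      have := hup (n + 1) n.succ_pos; push_cast at this; linarith [hL.2]
    have : p / 2 * (x - n) < p / 4 + 3 / 2 := by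
      calc p / 2 * (x - n) < p / 2 * (1 / 2 + 3 / p) := by gcongr
        _ = p / 4 + 3 / 2 := by field_simp; ring
    have : (m : ℝ) < 2 := by linarith [hT.1]
    have : m < 2 := by exact_mod_cast this
    omega
  have hm_ge : -(n : ℤ) ≤ m := by
    have : -2 * (n : ℝ) ≤ p / 2 * (x - n) := by
      calc -2 * (n : ℝ) = p / 2 * (n * (1 - 4 / p) - n) := by field_simp; ring
        _ ≤ p / 2 * (x - n) := by gcongr; linarith [hlow n, hL.1]
    have : -(n : ℝ) - 1 < m := by linarith [hT.2]
    have : -(n : ℤ) - 1 < m := by exact_mod_cast this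
    omega
  exact ⟨(n + m).toNat, (1 - m).toNat, (mem_piece_iff hp (by omega) (by omega)).2 ⟨hL, hT⟩⟩

end Covering

section Integral

variable {p : ℝ} {τ : ℕ → ℝ}

lemma integrableOn_iUnion_piece (hp4 : 4 ≤ p) (hτ : Monotone τ) (hτ0 : 0 ≤ τ 0) :
    IntegrableOn (fun x => max 0 (Kp p τ x) ^ 2) (⋃ i : ℕ × ℕ, piece p τ i.1 i.2) := by
  have hbound : ∀ x ∈ ⋃ i : ℕ × ℕ, piece p τ i.1 i.2,
      ‖max 0 (Kp p τ x) ^ 2‖ ≤ (p ^ 2 / 4 + 1) * (1 + x ^ 2)⁻¹ := by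
    intro x hx
    obtain ⟨i, hi⟩ := mem_iUnion.1 hx
    rw [Real.norm_of_nonneg (sq_nonneg _)]
    exact sq_max_zero_Kp_le_of_mem_piece hp4 hτ hτ0 hi
  have hmeas : Measurable fun x => max 0 (Kp p τ x) ^ 2 :=
    (measurable_const.max (measurable_Kp hτ)).pow_const 2
  have hU : MeasurableSet (⋃ i : ℕ × ℕ, piece p τ i.1 i.2) :=
    .iUnion fun i => measurableSet_piece i.1 i.2
  exact Integrable.mono' (integrable_inv_one_add_sq.const_mul (p ^ 2 / 4 + 1)).integrableOn
    hmeas.aestronglyMeasurable ((ae_restrict_iff' hU).2 (ae_of_all _ hbound))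

lemma setIntegral_Ioi_eq_setIntegral_iUnion_piece (hp : 0 < p) (hp6 : p ≤ 6) (hτ : Monotone τ)
    (hτ0 : 0 ≤ τ 0) (hlow : ∀ n : ℕ, n * (1 - 4 / p) ≤ τ n)
    (hup : ∀ n : ℕ, 1 ≤ n → τ n ≤ n - 1 / 2 + 3 / p) :
    ∫ x in Ioi 0, max 0 (Kp p τ x) ^ 2 =
      ∫ x in ⋃ i : ℕ × ℕ, piece p τ i.1 i.2, max 0 (Kp p τ x) ^ 2 := by
  refine setIntegral_eq_of_subset_of_forall_sdiff_eq_zero measurableSet_Ioi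
    (iUnion_subset fun i x hx => pos_of_mem_piece hτ hτ0 hx) fun x ⟨hx0, hx⟩ => ?_
  rcases le_or_gt (Kp p τ x) 0 with hK | hK
  · simp [max_eq_left hK]
  · obtain ⟨k, j, hkj⟩ := exists_mem_piece_of_Kp_pos hp hp6 hτ hlow hup hx0 hK
    exact absurd (mem_iUnion.2 ⟨(k, j), hkj⟩) hx

lemma setIntegral_piece (hp : 0 < p) (hτ : Monotone τ) (hτ0 : 0 ≤ τ 0) (k j : ℕ) :
    ∫ x in piece p τ k j, max 0 (Kp p τ x) ^ 2 =
      if k = 0 ∧ j = 0 then 0 else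
        ∫ x in leftEnd p k j..leftEnd p k j + 2 / p, (Ioo (τ (k + j - 1)) (τ (k + j))).indicator
          (fun y => sin (p / 2 * π * (y - (k - 1 + j))) ^ 2 / (π ^ 2 * y ^ 2)) x := by
  split_ifs with h
  · simp [piece, h]
  · rw [setIntegral_congr_fun (measurableSet_piece k j)
      fun x hx => sq_max_zero_Kp_of_mem_piece hp hτ hτ0 hx,
      intervalIntegral.integral_of_le (by linarith [div_pos two_pos hp]),
      integral_Ioc_eq_integral_Ioo, setIntegral_indicator measurableSet_Ioo, piece, if_neg h]

end Integral

theorem stmt17_general (p δ₁ δ₂ : ℝ) (hp4 : 4 ≤ p) (hp6 : p ≤ 6)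
    (h1 : 1 - 4 / p ≤ δ₁)
    (h2 : 1 - 4 / p ≤ δ₂)
    (τ : ℕ → ℝ) (hτ : τ ∈ Tset δ₁ δ₂)
    (hτn : ∀ n : ℕ, 1 ≤ n → τ n ≤ (n : ℝ) - 1 / 2 + 3 / p) :
    Ep p τ = ∑' k : ℕ, Ap p τ k := by
  have hp : 0 < p := by linarith
  have hlow := natCast_mul_le_of_mem_Tset hτ h1 h2
  have hmono : Monotone τ := hτ.2.1.monotone
  have hτ0 : 0 ≤ τ 0 := hτ.1.ge
  have hsum := hasSum_integral_iUnion (s := fun i : ℕ × ℕ => piece p τ i.1 i.2)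
    (fun i => measurableSet_piece i.1 i.2)
    (pairwise_disjoint_piece hp hmono) (integrableOn_iUnion_piece hp4 hmono hτ0)
  calc Ep p τ = ∫ x in ⋃ i : ℕ × ℕ, piece p τ i.1 i.2, max 0 (Kp p τ x) ^ 2 :=
        setIntegral_Ioi_eq_setIntegral_iUnion_piece hp hp6 hmono hτ0 hlow hτn
    _ = ∑' k, ∑' j, ∫ x in piece p τ k j, max 0 (Kp p τ x) ^ 2 :=
        hsum.tsum_eq.symm.trans hsum.summable.tsum_prod
    _ = ∑' k, Ap p τ k :=
        tsum_congr fun k => tsum_congr fun j => setIntegral_piece hp hmono hτ0 k j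

theorem stmt17 (p δ₁ δ₂ : ℝ) (hp4 : 4 ≤ p) (hp6 : p ≤ 6)
    (hδ1pos : 0 < δ₁) (hδ2pos : 0 < δ₂)
    (h1 : 1 - 4 / p ≤ δ₁) (h1' : δ₁ ≤ 1 / 2 + 3 / p)
    (h2 : 1 - 4 / p ≤ δ₂) (h2' : δ₂ ≤ 1)
    (τ : ℕ → ℝ) (hτ : τ ∈ Tset δ₁ δ₂)
    (hτn : ∀ n : ℕ, 1 ≤ n → τ n ≤ (n : ℝ) - 1 / 2 + 3 / p) :
    Ep p τ = ∑' k : ℕ, Ap p τ k :=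
  stmt17_general p δ₁ δ₂ hp4 hp6 h1 h2 τ hτ hτn
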